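/- Lower bound for solutions of the integral equation: let n ≥ 1, 0 < 2s < n, 0 < σ < n, p, q > 0, and suppose u : ℝⁿ → (0,∞) is continuous, not identically zero, and satisfies u(x) = ∫_{ℝⁿ} R_{2s,n}/|x-y|^{n-2s} (∫_{ℝⁿ} u(z)^p/|y-z|^{σ} dz) u(y)^q dy with all integrals finite. Then there exist a constant C > 0 and a point x₀ such that u(x) ≥ C/|x-x₀|^{n-2s} for all |x-x₀| ≥ 1. -/
import Mathlib


open MeasureTheory Real

/-- The Riesz potential normalization constant `R_{γ,n} = Γ((n-γ)/2)/(π^{n/2} 2^γ Γ(γ/2))`. -/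
noncomputable def rieszConst (n : ℕ) (γ : ℝ) : ℝ :=
  Real.Gamma (((n : ℝ) - γ) / 2) /
    (Real.pi ^ ((n : ℝ) / 2) * (2 : ℝ) ^ γ * Real.Gamma (γ / 2))

set_option maxHeartbeats 1000000 in
/-- A positive continuous solution of the Schrödinger–Hartree-type integral equation satisfies
the lower bound `u(x) ≥ C/|x-x₀|^{n-2s}` for `|x-x₀| ≥ 1`, for some `C > 0` and some `x₀`. -/
theorem stmt_11 (n : ℕ) (hn : 1 ≤ n) (s σ p q : ℝ) (hs0 : 0 < s) (hs : 2 * s < n)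
    (hσ0 : 0 < σ) (hσn : σ < n) (hp : 0 < p) (hq : 0 < q)
    (u : EuclideanSpace ℝ (Fin n) → ℝ) (hcont : Continuous u) (hpos : ∀ x, 0 < u x)
    (hinner : ∀ y, Integrable (fun z : EuclideanSpace ℝ (Fin n) => u z ^ p / ‖y - z‖ ^ σ))
    (houter : ∀ x, Integrable (fun y : EuclideanSpace ℝ (Fin n) =>
      rieszConst n (2 * s) / ‖x - y‖ ^ ((n : ℝ) - 2 * s) *
        (∫ z : EuclideanSpace ℝ (Fin n), u z ^ p / ‖y - z‖ ^ σ) * u y ^ q))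
    (heq : ∀ x, u x =
      ∫ y : EuclideanSpace ℝ (Fin n),
        rieszConst n (2 * s) / ‖x - y‖ ^ ((n : ℝ) - 2 * s) *
          (∫ z : EuclideanSpace ℝ (Fin n), u z ^ p / ‖y - z‖ ^ σ) * u y ^ q) :
    ∃ (C : ℝ) (x₀ : EuclideanSpace ℝ (Fin n)), 0 < C ∧
      ∀ x, 1 ≤ ‖x - x₀‖ → C / ‖x - x₀‖ ^ ((n : ℝ) - 2 * s) ≤ u x := by
  haveI : Nonempty (Fin n) := ⟨⟨0, hn⟩⟩
  set α : ℝ := (n : ℝ) - 2 * s with hα_def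
  have hα : 0 < α := by simp only [hα_def]; linarith
  set R := rieszConst n (2 * s) with hR_def
  have hR : 0 < R := by
    rw [hR_def, rieszConst]
    apply div_pos
    · exact Real.Gamma_pos_of_pos (by positivity)
    · have h1 : 0 < Real.pi ^ ((n : ℝ) / 2) := Real.rpow_pos_of_pos Real.pi_pos _
      have h2 : (0:ℝ) < (2:ℝ) ^ (2 * s) := Real.rpow_pos_of_pos (by norm_num) _
      have h3 : 0 < Real.Gamma (2 * s / 2) := Real.Gamma_pos_of_pos (by linarith)
      positivity
  set V : EuclideanSpace ℝ (Fin n) → ℝ := fun y => ∫ z : EuclideanSpace ℝ (Fin n), u z ^ p / ‖y - z‖ ^ σ with hV_def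
  have hVnn : ∀ y, 0 ≤ V y := fun y =>
    integral_nonneg fun z =>
      div_nonneg (Real.rpow_nonneg (hpos z).le _) (Real.rpow_nonneg (norm_nonneg _) _)
  have hVpos : ∀ y, 0 < V y := by
    intro y
    refine (integral_pos_iff_support_of_nonneg_ae
      (Filter.Eventually.of_forall fun z =>
        div_nonneg (Real.rpow_nonneg (hpos z).le _) (Real.rpow_nonneg (norm_nonneg _) _))
      (hinner y)).mpr ?_
    have hsub : ({y}ᶜ : Set (EuclideanSpace ℝ (Fin n))) ⊆ Function.support (fun z => u z ^ p / ‖y - z‖ ^ σ) := by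
      intro z hz
      have hyz : y ≠ z := fun h => hz (by simp [h.symm])
      have hnz : 0 < ‖y - z‖ := by rwa [norm_sub_pos_iff]
      have : 0 < u z ^ p / ‖y - z‖ ^ σ :=
        div_pos (Real.rpow_pos_of_pos (hpos z) p) (Real.rpow_pos_of_pos hnz σ)
      exact this.ne'
    calc (0:ENNReal) < volume (Metric.ball y 1 \ {y}) := by
          rw [measure_diff_null (measure_singleton y)]
          exact Metric.measure_ball_pos _ _ one_pos
      _ ≤ volume ({y}ᶜ : Set (EuclideanSpace ℝ (Fin n))) := measure_mono (fun z hz => hz.2)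
      _ ≤ _ := measure_mono hsub
  -- the fixed reference point x₁ with ‖x₁‖ = 1
  set x₁ : EuclideanSpace ℝ (Fin n) := EuclideanSpace.single (⟨0, hn⟩ : Fin n) (1:ℝ) with hx₁_def
  have hx₁norm : ‖x₁‖ = 1 := by rw [hx₁_def, EuclideanSpace.norm_single]; norm_num
  set B : Set (EuclideanSpace ℝ (Fin n)) := Metric.ball (0 : EuclideanSpace ℝ (Fin n)) (1/2) with hB_def
  set F : EuclideanSpace ℝ (Fin n) → ℝ := fun y => R / ‖x₁ - y‖ ^ α * V y * u y ^ q with hF_def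
  have hFint : Integrable F := houter x₁
  have hFnn : ∀ y, 0 ≤ F y := fun y => by
    have h1 : (0:ℝ) ≤ ‖x₁ - y‖ ^ α := Real.rpow_nonneg (norm_nonneg _) _
    have h2 : (0:ℝ) ≤ u y ^ q := Real.rpow_nonneg (hpos y).le _
    exact mul_nonneg (mul_nonneg (div_nonneg hR.le h1) (hVnn y)) h2
  have hFposB : ∀ y ∈ B, 0 < F y := by
    intro y hy
    have hy' : ‖y‖ < 1/2 := by rwa [hB_def, Metric.mem_ball, dist_zero_right] at hy
    have h1 : 0 < ‖x₁ - y‖ := by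
      have := norm_sub_norm_le x₁ y
      rw [hx₁norm] at this; linarith
    exact mul_pos (mul_pos (div_pos hR (Real.rpow_pos_of_pos h1 α)) (hVpos y))
      (Real.rpow_pos_of_pos (hpos y) q)
  set I : ℝ := ∫ y in B, F y with hI_def
  have hIpos : 0 < I := by
    rw [hI_def, setIntegral_pos_iff_support_of_nonneg_ae
      (Filter.Eventually.of_forall fun y => hFnn y) hFint.integrableOn]
    refine lt_of_lt_of_le (Metric.measure_ball_pos volume (0 : EuclideanSpace ℝ (Fin n)) (by norm_num : (0:ℝ) < 1/2))
      (measure_mono ?_)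
    intro y hy
    exact ⟨(hFposB y hy).ne', hy⟩
  refine ⟨(1/4 : ℝ) ^ α * I, 0, mul_pos (Real.rpow_pos_of_pos (by norm_num) _) hIpos, ?_⟩
  intro x hx
  rw [sub_zero] at hx ⊢
  have hxpos : (0:ℝ) < ‖x‖ := by linarith
  have hxα : 0 < ‖x‖ ^ α := Real.rpow_pos_of_pos hxpos _
  set c : ℝ := (1/4 : ℝ) ^ α / ‖x‖ ^ α with hc_def
  have hcpos : 0 < c := div_pos (Real.rpow_pos_of_pos (by norm_num) _) hxα
  -- pointwise bound on B
  have hkey : ∀ y ∈ B, c * F y ≤ R / ‖x - y‖ ^ α * V y * u y ^ q := by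
    intro y hy
    have hy' : ‖y‖ < 1/2 := by rwa [hB_def, Metric.mem_ball, dist_zero_right] at hy
    have hx₁y : (1/2 : ℝ) ≤ ‖x₁ - y‖ := by
      have := norm_sub_norm_le x₁ y; rw [hx₁norm] at this; linarith
    have hxy_lb : (1/2 : ℝ) ≤ ‖x - y‖ := by
      have := norm_sub_norm_le x y; linarith
    have hxy_ub : ‖x - y‖ ≤ 2 * ‖x‖ := by
      have := norm_sub_le x y; linarith
    set a : ℝ := (1/2 : ℝ) ^ α with ha_def
    have ha : 0 < a := Real.rpow_pos_of_pos (by norm_num) _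
    set b : ℝ := (2 : ℝ) ^ α with hb_def
    have hab : a * b = 1 := by
      rw [ha_def, hb_def, ← Real.mul_rpow (by norm_num) (by norm_num)]
      norm_num
    have h14 : (1/4 : ℝ) ^ α = a * a := by
      rw [ha_def, ← Real.mul_rpow (by norm_num) (by norm_num)]; norm_num
    have h2 : ‖x - y‖ ^ α ≤ b * ‖x‖ ^ α := by
      rw [hb_def, ← Real.mul_rpow (by norm_num) (norm_nonneg x)]
      exact Real.rpow_le_rpow (norm_nonneg _) hxy_ub hα.le
    have h3 : a ≤ ‖x₁ - y‖ ^ α := Real.rpow_le_rpow (by norm_num) hx₁y hα.le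
    have h3' : a ≤ ‖x - y‖ ^ α := Real.rpow_le_rpow (by norm_num) hxy_lb hα.le
    have hxyα : 0 < ‖x - y‖ ^ α := lt_of_lt_of_le ha h3'
    have hx₁yα : 0 < ‖x₁ - y‖ ^ α := lt_of_lt_of_le ha h3
    have key : c / ‖x₁ - y‖ ^ α ≤ 1 / ‖x - y‖ ^ α := by
      rw [hc_def, h14, div_div, div_le_div_iff₀ (mul_pos hxα hx₁yα) hxyα]
      calc a * a * ‖x - y‖ ^ α ≤ a * a * (b * ‖x‖ ^ α) :=
            mul_le_mul_of_nonneg_left h2 (mul_pos ha ha).le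
        _ = (a * b) * (a * ‖x‖ ^ α) := by ring
        _ = a * ‖x‖ ^ α := by rw [hab]; ring
        _ ≤ ‖x₁ - y‖ ^ α * ‖x‖ ^ α := mul_le_mul_of_nonneg_right h3 hxα.le
        _ = 1 * (‖x‖ ^ α * ‖x₁ - y‖ ^ α) := by ring
    have hnn : 0 ≤ R * V y * u y ^ q :=
      mul_nonneg (mul_nonneg hR.le (hVnn y)) (Real.rpow_nonneg (hpos y).le _)
    have h := mul_le_mul_of_nonneg_left key hnn
    calc c * F y = R * V y * u y ^ q * (c / ‖x₁ - y‖ ^ α) := by rw [hF_def]; ring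
      _ ≤ R * V y * u y ^ q * (1 / ‖x - y‖ ^ α) := h
      _ = R / ‖x - y‖ ^ α * V y * u y ^ q := by ring
  have step1 : ∫ y in B, c * F y ≤ ∫ y in B, R / ‖x - y‖ ^ α * V y * u y ^ q := by
    refine setIntegral_mono_on ((hFint.const_mul c).integrableOn)
      ((houter x).integrableOn) measurableSet_ball hkey
  have step2 : ∫ y in B, R / ‖x - y‖ ^ α * V y * u y ^ q ≤
      ∫ y, R / ‖x - y‖ ^ α * V y * u y ^ q := by
    refine setIntegral_le_integral (houter x) (Filter.Eventually.of_forall fun y => ?_)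
    have h1 : (0:ℝ) ≤ ‖x - y‖ ^ α := Real.rpow_nonneg (norm_nonneg _) _
    have h2 : (0:ℝ) ≤ u y ^ q := Real.rpow_nonneg (hpos y).le _
    exact mul_nonneg (mul_nonneg (div_nonneg hR.le h1) (hVnn y)) h2
  have hux : u x = ∫ y, R / ‖x - y‖ ^ α * V y * u y ^ q := heq x
  have hconst : ∫ y in B, c * F y = c * I := by
    rw [hI_def, MeasureTheory.integral_const_mul]
  calc (1/4 : ℝ) ^ α * I / ‖x‖ ^ α = c * I := by rw [hc_def]; ring
    _ = ∫ y in B, c * F y := hconst.symm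
    _ ≤ ∫ y in B, R / ‖x - y‖ ^ α * V y * u y ^ q := step1
    _ ≤ ∫ y, R / ‖x - y‖ ^ α * V y * u y ^ q := step2
    _ = u x := hux.symm
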